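/- Let S be a nonempty finite set of nonnegative integers, and for each k ∈ S let J_k be a nonnegative integer, β_{k,1}, …, β_{k,J_k} real numbers, and ξ_{k,1}, …, ξ_{k,J_k} strictly increasing knot vectors in [0,1]^{k+2}. Define η(x) = Σ_{k ∈ S} Σ_{l=1}^{J_k} β_{k,l} · B_k(x; ξ_{k,l}) for x ∈ [0,1]. Then for every 1 ≤ p, q < ∞ and every α with 0 < α < min(S) + 1/p, the function η belongs to the Besov space B^α_{p,q}([0,1]). (Deterministic finite-sum content of Theorem 2 of the paper, which holds for every realization of the LABS mean function driven by finite Lévy measures.) -/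

import Mathlib

open MeasureTheory Set
open scoped ENNReal

/-- B-spline basis function of degree `k` with knot vector `ξ = (ξ₀, …, ξ_{k+1})`
(0-indexed), defined by the Cox–de Boor recursion. -/
noncomputable def bspline : (k : ℕ) → (Fin (k + 2) → ℝ) → ℝ → ℝ
  | 0, ξ, x => if ξ 0 ≤ x ∧ x < ξ 1 then 1 else 0
  | (m + 1), ξ, x =>
      (x - ξ 0) / (ξ ⟨m + 1, by omega⟩ - ξ 0) * bspline m (fun i => ξ i.castSucc) x
      + (ξ (Fin.last (m + 2)) - x) / (ξ (Fin.last (m + 2)) - ξ 1) *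
          bspline m (fun i => ξ i.succ) x

/-- The `r`-th order forward finite difference `Δ_h^r f (x)`. -/
noncomputable def finiteDiff (r : ℕ) (h : ℝ) (f : ℝ → ℝ) (x : ℝ) : ℝ :=
  ∑ j ∈ Finset.range (r + 1), (r.choose j : ℝ) * (-1 : ℝ) ^ (r - j) * f (x + j * h)

/-- The `r`-th order modulus of smoothness `ω_r(f, t)_p` on `[0,1]`. -/
noncomputable def modSmooth (p : ℝ) (r : ℕ) (f : ℝ → ℝ) (t : ℝ) : ℝ :=
  sSup ((fun h => (∫ x in Set.Ioo (0 : ℝ) (1 - r * h), |finiteDiff r h f x| ^ p) ^ (1 / p)) ''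
    Set.Ioc 0 t)

/-- The smallest integer `r` with `r > α` (for `α > 0`). -/
noncomputable def besovR (α : ℝ) : ℕ := ⌊α⌋₊ + 1

/-- The Besov seminorm `|f|_{B^α_{p,q}}` on `[0,1]`, valued in `ℝ≥0∞`. -/
noncomputable def besovSeminorm (p q α : ℝ) (f : ℝ → ℝ) : ℝ≥0∞ :=
  (∫⁻ t in Set.Ioi (0 : ℝ),
      ENNReal.ofReal ((t ^ (-α) * modSmooth p (besovR α) f t) ^ q / t)) ^ (1 / q)

/-- Membership in the Besov space `B^α_{p,q}([0,1])`: `f ∈ L^p([0,1])` and the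
Besov seminorm is finite. -/
def memBesov (p q α : ℝ) (f : ℝ → ℝ) : Prop :=
  MemLp f (ENNReal.ofReal p) (volume.restrict (Set.Icc (0 : ℝ) 1)) ∧
  besovSeminorm p q α f < ⊤

/-!
The Besov seminorm of order `α` is finite as soon as `η` is bounded and
`‖Δ_h^r η‖_{L^p(0,1)} = O(h^γ)` for some `γ > α`, where `r = ⌊α⌋ + 1`. For a single B-spline of
degree `k` (and `r ≤ k + 1`, which holds because `α < min S + 1`) this decay holds with
`γ = min(r, k + 1/p)`:
* if `r ≤ k`, then `Δ_h^r B_k = O(h^r)` uniformly: away from the knots `B_k'` is a combination of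
  two B-splines of degree `k - 1`, and `Δ_h f (x) = ∫_0^h f'(x + s) ds` lets the bound pass from
  `r - 1` to `r`;
* if `r = k + 1`, then `Δ_h^{k+1} B_k` vanishes outside the `(k + 1) h`-neighbourhood of the knots,
  since `B_k` is a polynomial of degree `≤ k` between consecutive knots, and is `O(h^k)` on it;
  a set of measure `O(h)` contributes `O(h^{k + 1/p})` to the `L^p` norm.
-/

open Topology Polynomial
open scoped NNReal

section FiniteDiff

variable {r : ℕ} {h : ℝ} {f g : ℝ → ℝ} {x : ℝ}

lemma finiteDiff_eq_fwdDiff_iter (r : ℕ) (h : ℝ) (f : ℝ → ℝ) (x : ℝ) :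
    finiteDiff r h f x = (fwdDiff h)^[r] f x := by
  rw [fwdDiff_iter_eq_sum_shift, finiteDiff]
  refine Finset.sum_congr rfl fun j _ => ?_
  push_cast [zsmul_eq_mul, nsmul_eq_mul]
  ring

lemma finiteDiff_succ (r : ℕ) (h : ℝ) (f : ℝ → ℝ) (x : ℝ) :
    finiteDiff (r + 1) h f x = finiteDiff r h (fwdDiff h f) x := by
  simp only [finiteDiff_eq_fwdDiff_iter, Function.iterate_succ_apply]

lemma finiteDiff_succ' (r : ℕ) (h : ℝ) (f : ℝ → ℝ) (x : ℝ) :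
    finiteDiff (r + 1) h f x = finiteDiff r h f (x + h) - finiteDiff r h f x := by
  simp only [finiteDiff_eq_fwdDiff_iter, Function.iterate_succ_apply', fwdDiff]

lemma finiteDiff_const_mul (r : ℕ) (h c : ℝ) (f : ℝ → ℝ) (x : ℝ) :
    finiteDiff r h (fun y => c * f y) x = c * finiteDiff r h f x := by
  simp only [finiteDiff, Finset.mul_sum]
  exact Finset.sum_congr rfl fun _ _ => by ring

lemma finiteDiff_sub (r : ℕ) (h : ℝ) (f g : ℝ → ℝ) (x : ℝ) :
    finiteDiff r h (fun y => f y - g y) x = finiteDiff r h f x - finiteDiff r h g x := by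
  simp only [finiteDiff, ← Finset.sum_sub_distrib]
  exact Finset.sum_congr rfl fun _ _ => by ring

lemma finiteDiff_finset_sum {ι : Type*} (s : Finset ι) (F : ι → ℝ → ℝ) (r : ℕ) (h x : ℝ) :
    finiteDiff r h (fun y => ∑ i ∈ s, F i y) x = ∑ i ∈ s, finiteDiff r h (F i) x := by
  simp only [finiteDiff, Finset.mul_sum]
  exact Finset.sum_comm

lemma measurable_finiteDiff (r : ℕ) (h : ℝ) (hf : Measurable f) :
    Measurable (finiteDiff r h f) :=
  Finset.measurable_sum _ fun _ _ => measurable_const.mul (hf.comp (by fun_prop))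

lemma abs_finiteDiff_le {M : ℝ} (hf : ∀ y, |f y| ≤ M) : |finiteDiff r h f x| ≤ 2 ^ r * M := by
  calc |finiteDiff r h f x|
      ≤ ∑ j ∈ Finset.range (r + 1), |(r.choose j : ℝ) * (-1) ^ (r - j) * f (x + j * h)| :=
        Finset.abs_sum_le_sum_abs _ _
    _ ≤ ∑ j ∈ Finset.range (r + 1), (r.choose j : ℝ) * M := by
        gcongr with j
        simpa [abs_mul] using mul_le_mul_of_nonneg_left (hf _) (Nat.cast_nonneg (r.choose j))
    _ = 2 ^ r * M := by
        rw [← Finset.sum_mul]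
        exact_mod_cast congrArg (fun n : ℕ => (n : ℝ) * M) (Nat.sum_range_choose r)

/-- The substitution `t ↦ x + t h` turns a difference of step `h` into one of step `1`, where
`Polynomial.fwdDiff_iter_eq_zero_of_degree_lt` applies. -/
lemma finiteDiff_eval_eq_zero (P : ℝ[X]) (hP : P.natDegree < r) (h x : ℝ) :
    finiteDiff r h P.eval x = 0 := by
  set Q := P.comp (C x + C h * X)
  have hQ : Q.natDegree < r := by
    refine (natDegree_comp_le.trans ?_).trans_lt hP
    have : (C x + C h * X).natDegree ≤ 1 := by compute_degree
    nlinarith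
  have h0 := congrFun (fwdDiff_iter_eq_zero_of_degree_lt hQ) 0
  rw [fwdDiff_iter_eq_sum_shift, Pi.zero_apply] at h0
  rw [finiteDiff, ← h0]
  refine Finset.sum_congr rfl fun j _ => ?_
  simp only [Q, eval_comp, eval_add, eval_mul, eval_C, eval_X, zero_add, nsmul_eq_mul, mul_one,
    zsmul_eq_mul]
  push_cast
  rw [mul_comm h]
  ring

lemma finiteDiff_intervalIntegral (hg : ∀ a b, IntervalIntegrable g volume a b) (r : ℕ) (h x : ℝ) :
    finiteDiff r h (fun y => ∫ s in (0 : ℝ)..h, g (y + s)) x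
      = ∫ s in (0 : ℝ)..h, finiteDiff r h g (x + s) := by
  have hint (j : ℕ) : IntervalIntegrable (fun s => g (x + j * h + s)) volume 0 h := by
    have := (hg (x + j * h) (x + j * h + h)).comp_add_left (x + j * h)
    rwa [sub_self, add_sub_cancel_left] at this
  simp only [finiteDiff]
  simp_rw [add_right_comm x _ ((_ : ℕ) * h)]
  rw [intervalIntegral.integral_finsetSum fun j _ => (hint j).const_mul _]
  refine Finset.sum_congr rfl fun j _ => ?_
  rw [intervalIntegral.integral_const_mul]

lemma abs_finiteDiff_succ_le_of_hasDerivAt {s : Set ℝ} (hs : s.Countable) (hf : Continuous f)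
    (hfg : ∀ x ∉ s, HasDerivAt f (g x) x) (hg : ∀ a b, IntervalIntegrable g volume a b) {C : ℝ}
    (hh : 0 ≤ h)
    (hC : ∀ x, |finiteDiff r h g x| ≤ C * h ^ r) (x : ℝ) :
    |finiteDiff (r + 1) h f x| ≤ C * h ^ (r + 1) := by
  have hΔ : fwdDiff h f = fun y => ∫ s in (0 : ℝ)..h, g (y + s) := by
    funext y
    rw [intervalIntegral.integral_comp_add_left g y, add_zero, add_comm y h,
      integral_eq_of_hasDerivAt_off_countable_of_le f g (by linarith) hs hf.continuousOn
        (fun z hz => hfg z hz.2) (hg _ _)]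
    rw [fwdDiff, add_comm]
  rw [finiteDiff_succ, hΔ, finiteDiff_intervalIntegral hg]
  calc |∫ s in (0 : ℝ)..h, finiteDiff r h g (x + s)| ≤ C * h ^ r * |h - 0| :=
        intervalIntegral.norm_integral_le_of_norm_le_const
          (f := fun s => finiteDiff r h g (x + s)) fun s _ => hC (x + s)
    _ = C * h ^ (r + 1) := by rw [sub_zero, abs_of_nonneg hh, pow_succ, mul_assoc]

end FiniteDiff

lemma bspline_succ (m : ℕ) (ξ : Fin (m + 3) → ℝ) (x : ℝ) :
    bspline (m + 1) ξ x =
      (x - ξ 0) / (ξ (Fin.last (m + 1)).castSucc - ξ 0) * bspline m (fun i => ξ i.castSucc) x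
      + (ξ (Fin.last (m + 2)) - x) / (ξ (Fin.last (m + 2)) - ξ 1) *
          bspline m (fun i => ξ i.succ) x :=
  rfl

lemma bspline_eq_zero_of_notMem_Ico {k : ℕ} {ξ : Fin (k + 2) → ℝ} (hξ : Monotone ξ) {x : ℝ}
    (hx : x ∉ Ico (ξ 0) (ξ (Fin.last (k + 1)))) : bspline k ξ x = 0 := by
  induction k with
  | zero => simpa [bspline] using hx
  | succ m ih =>
    have hL : bspline m (fun i => ξ i.castSucc) x = 0 :=
      ih (hξ.comp Fin.strictMono_castSucc.monotone) fun hx' =>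
        hx ⟨hx'.1, hx'.2.trans_le (hξ (Fin.le_last _))⟩
    have hR : bspline m (fun i => ξ i.succ) x = 0 :=
      ih (hξ.comp Fin.strictMono_succ.monotone) fun hx' =>
        hx ⟨(hξ (Fin.zero_le _)).trans hx'.1, hx'.2⟩
    rw [bspline_succ, hL, hR, mul_zero, mul_zero, add_zero]

/-- Each term of the recursion is at most the lower-degree spline it multiplies, since the affine
weight lies in `[0, 1]` on that spline's support; hence the crude bound `2 ^ k`. -/
lemma abs_bspline_le {k : ℕ} {ξ : Fin (k + 2) → ℝ} (hξ : Monotone ξ) (x : ℝ) :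
    |bspline k ξ x| ≤ 2 ^ k := by
  induction k with
  | zero => unfold bspline; split_ifs <;> simp
  | succ m ih =>
    have hweight {u v F : ℝ} (hu : 0 ≤ u) (huv : u ≤ v) : |u / v * F| ≤ |F| := by
      rw [abs_mul, abs_div, abs_of_nonneg hu, abs_of_nonneg (hu.trans huv)]
      exact mul_le_of_le_one_left (abs_nonneg F) (div_le_one_of_le₀ huv (hu.trans huv))
    have hL : |(x - ξ 0) / (ξ (Fin.last (m + 1)).castSucc - ξ 0) *
        bspline m (fun i => ξ i.castSucc) x| ≤ 2 ^ m := by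
      by_cases hx : x ∈ Ico (ξ 0) (ξ (Fin.last (m + 1)).castSucc)
      · exact (hweight (sub_nonneg.2 hx.1) (by linarith [hx.2])).trans
          (ih (hξ.comp Fin.strictMono_castSucc.monotone))
      · rw [bspline_eq_zero_of_notMem_Ico (ξ := fun i => ξ i.castSucc)
          (hξ.comp Fin.strictMono_castSucc.monotone) hx]
        simp
    have hR : |(ξ (Fin.last (m + 2)) - x) / (ξ (Fin.last (m + 2)) - ξ 1) *
        bspline m (fun i => ξ i.succ) x| ≤ 2 ^ m := by
      by_cases hx : x ∈ Ico (ξ 1) (ξ (Fin.last (m + 2)))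
      · exact (hweight (by linarith [hx.2]) (by linarith [hx.1])).trans
          (ih (hξ.comp Fin.strictMono_succ.monotone))
      · rw [bspline_eq_zero_of_notMem_Ico (ξ := fun i => ξ i.succ)
          (hξ.comp Fin.strictMono_succ.monotone) hx]
        simp
    rw [bspline_succ, pow_succ, mul_two]
    exact (abs_add_le _ _).trans (add_le_add hL hR)

@[fun_prop]
lemma measurable_bspline (k : ℕ) (ξ : Fin (k + 2) → ℝ) : Measurable (bspline k ξ) := by
  induction k with
  | zero =>
    simp only [bspline]
    exact Measurable.ite (measurableSet_le measurable_const measurable_id |>.inter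
      (measurableSet_lt measurable_id measurable_const)) measurable_const measurable_const
  | succ m ih =>
    have := ih (fun i => ξ i.castSucc)
    have := ih (fun i => ξ i.succ)
    rw [funext (bspline_succ m ξ)]
    fun_prop

lemma intervalIntegrable_bspline {k : ℕ} {ξ : Fin (k + 2) → ℝ} (hξ : Monotone ξ) (a b : ℝ) :
    IntervalIntegrable (bspline k ξ) volume a b :=
  (intervalIntegrable_const (c := (2 : ℝ) ^ k)).mono_fun'
    (measurable_bspline k ξ).aestronglyMeasurable (ae_of_all _ fun x => abs_bspline_le hξ x)

lemma exists_natDegree_le_eqOn_bspline (k : ℕ) (ξ : Fin (k + 2) → ℝ) {a b : ℝ}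
    (hab : ∀ i, ξ i ∉ Icc a b) :
    ∃ P : ℝ[X], P.natDegree ≤ k ∧ EqOn (bspline k ξ) P.eval (Icc a b) := by
  induction k with
  | zero =>
    refine ⟨C (bspline 0 ξ a), natDegree_C _ |>.le, fun x hx => ?_⟩
    have h₀ : ξ 0 ≤ x ↔ ξ 0 ≤ a := ⟨fun h => not_lt.1 fun ha => hab 0 ⟨ha.le, h.trans hx.2⟩,
      fun h => h.trans hx.1⟩
    have h₁ : x < ξ 1 ↔ a < ξ 1 := ⟨hx.1.trans_lt, fun h => not_le.1 fun hx' =>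
      hab 1 ⟨h.le, hx'.trans hx.2⟩⟩
    simp only [bspline, h₀, h₁, eval_C]
  | succ m ih =>
    obtain ⟨PL, hPL, hL⟩ := ih (fun i => ξ i.castSucc) fun i => hab i.castSucc
    obtain ⟨PR, hPR, hR⟩ := ih (fun i => ξ i.succ) fun i => hab i.succ
    set cL := (ξ (Fin.last (m + 1)).castSucc - ξ 0)⁻¹
    set cR := (ξ (Fin.last (m + 2)) - ξ 1)⁻¹
    have hlinL : (C cL * (X - C (ξ 0))).natDegree ≤ 1 := by compute_degree
    have hlinR : (C cR * (C (ξ (Fin.last (m + 2))) - X)).natDegree ≤ 1 := by compute_degree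
    refine ⟨C cL * (X - C (ξ 0)) * PL + C cR * (C (ξ (Fin.last (m + 2))) - X) * PR,
      natDegree_add_le_of_degree_le ((natDegree_mul_le_of_le hlinL hPL).trans (by omega))
        ((natDegree_mul_le_of_le hlinR hPR).trans (by omega)), fun x hx => ?_⟩
    rw [bspline_succ, hL hx, hR hx]
    simp only [eval_add, eval_mul, eval_sub, eval_C, eval_X, cL, cR]
    ring

lemma bspline_eventuallyEq_eval (k : ℕ) (ξ : Fin (k + 2) → ℝ) {x : ℝ} (hx : x ∉ range ξ) :
    ∃ P : ℝ[X], P.natDegree ≤ k ∧ bspline k ξ =ᶠ[𝓝 x] P.eval := by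
  have hopen : IsOpen (range ξ)ᶜ := (finite_range ξ).isClosed.isOpen_compl
  obtain ⟨ε, hε, hball⟩ := Metric.isOpen_iff.1 hopen x hx
  have hknots (i : Fin (k + 2)) : ξ i ∉ Icc (x - ε / 2) (x + ε / 2) := fun hi => by
    refine hball ?_ ⟨i, rfl⟩
    rw [Metric.mem_ball, Real.dist_eq, abs_lt]
    constructor <;> linarith [hi.1, hi.2]
  obtain ⟨P, hP, hEq⟩ := exists_natDegree_le_eqOn_bspline k ξ hknots
  exact ⟨P, hP, Filter.eventuallyEq_of_mem (Icc_mem_nhds (by linarith) (by linarith)) hEq⟩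

noncomputable def bsplineDeriv : (k : ℕ) → (Fin (k + 2) → ℝ) → ℝ → ℝ
  | 0, _, _ => 0
  | m + 1, ξ, x =>
      (m + 1) / (ξ (Fin.last (m + 1)).castSucc - ξ 0) * bspline m (fun i => ξ i.castSucc) x
      - (m + 1) / (ξ (Fin.last (m + 2)) - ξ 1) * bspline m (fun i => ξ i.succ) x

/-- `bsplineDeriv_succ` in degree `n + 1`, once the two splines of degree `n` are expanded into the
three splines `P, Q, R` of degree `n - 1`; `t₀, t₁, t₂` are the first knots and `tA, tB, tC` the
last. -/
lemma bsplineDeriv_succ_aux {n x t₀ t₁ t₂ tA tB tC P Q R : ℝ} (hA : tA - t₀ ≠ 0)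
    (hB₀ : tB - t₀ ≠ 0) (hB₁ : tB - t₁ ≠ 0) (hC₁ : tC - t₁ ≠ 0) (hC₂ : tC - t₂ ≠ 0) :
    (n + 1) / (tB - t₀) * ((x - t₀) / (tA - t₀) * P + (tB - x) / (tB - t₁) * Q)
      - (n + 1) / (tC - t₁) * ((x - t₁) / (tB - t₁) * Q + (tC - x) / (tC - t₂) * R)
    = 1 / (tB - t₀) * ((x - t₀) / (tA - t₀) * P + (tB - x) / (tB - t₁) * Q)
      + (x - t₀) / (tB - t₀) * (n / (tA - t₀) * P - n / (tB - t₁) * Q)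
      + -1 / (tC - t₁) * ((x - t₁) / (tB - t₁) * Q + (tC - x) / (tC - t₂) * R)
      + (tC - x) / (tC - t₁) * (n / (tB - t₁) * Q - n / (tC - t₂) * R) := by
  field_simp
  ring

lemma bsplineDeriv_succ {m : ℕ} {ξ : Fin (m + 3) → ℝ} (hξ : StrictMono ξ) (x : ℝ) :
    bsplineDeriv (m + 1) ξ x =
      1 / (ξ (Fin.last (m + 1)).castSucc - ξ 0) * bspline m (fun i => ξ i.castSucc) x
      + (x - ξ 0) / (ξ (Fin.last (m + 1)).castSucc - ξ 0) *
          bsplineDeriv m (fun i => ξ i.castSucc) x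
      + -1 / (ξ (Fin.last (m + 2)) - ξ 1) * bspline m (fun i => ξ i.succ) x
      + (ξ (Fin.last (m + 2)) - x) / (ξ (Fin.last (m + 2)) - ξ 1) *
          bsplineDeriv m (fun i => ξ i.succ) x := by
  have hne {i j : Fin (m + 3)} (hij : i < j) : ξ j - ξ i ≠ 0 := sub_ne_zero.2 (hξ hij).ne'
  cases m with
  | zero => simp only [bsplineDeriv]; ring
  | succ j =>
    simp only [bsplineDeriv, bspline_succ]
    push_cast
    exact bsplineDeriv_succ_aux (hne (by simp [Fin.lt_def])) (hne (by simp [Fin.lt_def]))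
      (hne (by simp [Fin.lt_def])) (hne (by simp [Fin.lt_def]))
      (hne (by simp [Fin.lt_def, Nat.mod_eq_of_lt (show 2 < j + 1 + 2 + 1 by omega)]))

lemma hasDerivAt_bspline {k : ℕ} {ξ : Fin (k + 2) → ℝ} (hξ : StrictMono ξ) {x : ℝ}
    (hx : x ∉ range ξ) : HasDerivAt (bspline k ξ) (bsplineDeriv k ξ x) x := by
  induction k with
  | zero =>
    obtain ⟨P, hP, hEq⟩ := bspline_eventuallyEq_eval 0 ξ hx
    have := (P.hasDerivAt x).congr_of_eventuallyEq hEq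
    rwa [derivative_of_natDegree_zero (Nat.le_zero.1 hP), eval_zero] at this
  | succ m ih =>
    have hL := ih (ξ := fun i => ξ i.castSucc) (hξ.comp Fin.strictMono_castSucc)
      fun ⟨i, hi⟩ => hx ⟨i.castSucc, hi⟩
    have hR := ih (ξ := fun i => ξ i.succ) (hξ.comp Fin.strictMono_succ)
      fun ⟨i, hi⟩ => hx ⟨i.succ, hi⟩
    have hwL := ((hasDerivAt_id' x).sub_const (ξ 0)).div_const
      (ξ (Fin.last (m + 1)).castSucc - ξ 0)
    have hwR := ((hasDerivAt_id' x).const_sub (ξ (Fin.last (m + 2)))).div_const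
      (ξ (Fin.last (m + 2)) - ξ 1)
    rw [bsplineDeriv_succ hξ, funext (bspline_succ m ξ)]
    exact ((hwL.mul hL).add (hwR.mul hR)).congr_deriv (by ring)

lemma bspline_one_eq {ξ : Fin 3 → ℝ} (hξ : StrictMono ξ) (x : ℝ) :
    bspline 1 ξ x = max 0 (min ((x - ξ 0) / (ξ 1 - ξ 0)) ((ξ 2 - x) / (ξ 2 - ξ 1))) := by
  have h₀₁ : ξ 0 < ξ 1 := hξ (by decide)
  have h₁₂ : ξ 1 < ξ 2 := hξ (by decide)
  have hB : bspline 1 ξ x = (x - ξ 0) / (ξ 1 - ξ 0) * (if ξ 0 ≤ x ∧ x < ξ 1 then 1 else 0)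
      + (ξ 2 - x) / (ξ 2 - ξ 1) * (if ξ 1 ≤ x ∧ x < ξ 2 then 1 else 0) := rfl
  have hd₀₁ : 0 < ξ 1 - ξ 0 := sub_pos.2 h₀₁
  have hd₁₂ : 0 < ξ 2 - ξ 1 := sub_pos.2 h₁₂
  rw [hB]
  rcases lt_or_ge x (ξ 0) with h0 | h0
  · have ha : (x - ξ 0) / (ξ 1 - ξ 0) < 0 := div_neg_of_neg_of_pos (by linarith) hd₀₁
    rw [if_neg (by intro h; linarith [h.1]), if_neg (by intro h; linarith [h.1]),
      max_eq_left ((min_le_left _ _).trans ha.le)]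
    ring
  rcases lt_or_ge x (ξ 1) with h1 | h1
  · have ha : (x - ξ 0) / (ξ 1 - ξ 0) ≤ 1 := (div_le_one hd₀₁).2 (by linarith)
    have hb : 1 ≤ (ξ 2 - x) / (ξ 2 - ξ 1) := (one_le_div hd₁₂).2 (by linarith)
    rw [if_pos ⟨h0, h1⟩, if_neg (by intro h; linarith [h.1]), min_eq_left (ha.trans hb),
      max_eq_right (div_nonneg (by linarith) hd₀₁.le)]
    ring
  rcases lt_or_ge x (ξ 2) with h2 | h2
  · have ha : 1 ≤ (x - ξ 0) / (ξ 1 - ξ 0) := (one_le_div hd₀₁).2 (by linarith)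
    have hb : (ξ 2 - x) / (ξ 2 - ξ 1) ≤ 1 := (div_le_one hd₁₂).2 (by linarith)
    rw [if_neg (by intro h; linarith [h.2]), if_pos ⟨h1, h2⟩, min_eq_right (hb.trans ha),
      max_eq_right (div_nonneg (by linarith) hd₁₂.le)]
    ring
  · have hb : (ξ 2 - x) / (ξ 2 - ξ 1) ≤ 0 := div_nonpos_of_nonpos_of_nonneg (by linarith) hd₁₂.le
    rw [if_neg (by intro h; linarith [h.2]), if_neg (by intro h; linarith [h.2]),
      max_eq_left ((min_le_right _ _).trans hb)]
    ring

lemma continuous_bspline_succ {k : ℕ} {ξ : Fin (k + 3) → ℝ} (hξ : StrictMono ξ) :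
    Continuous (bspline (k + 1) ξ) := by
  induction k with
  | zero =>
    rw [funext (bspline_one_eq hξ)]
    fun_prop
  | succ m ih =>
    have hL := ih (hξ.comp Fin.strictMono_castSucc)
    have hR := ih (hξ.comp Fin.strictMono_succ)
    rw [funext (bspline_succ (m + 1) ξ)]
    fun_prop

lemma exists_abs_finiteDiff_bspline_le {r k : ℕ} (hrk : r ≤ k) {ξ : Fin (k + 2) → ℝ}
    (hξ : StrictMono ξ) : ∃ C, ∀ h, 0 ≤ h → ∀ x, |finiteDiff r h (bspline k ξ) x| ≤ C * h ^ r := by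
  induction r generalizing k with
  | zero => exact ⟨2 ^ k, fun h _ x => by simpa [finiteDiff] using abs_bspline_le hξ.monotone x⟩
  | succ r ih =>
    obtain ⟨m, rfl⟩ : ∃ m, k = m + 1 := ⟨k - 1, by omega⟩
    have hL : StrictMono fun i : Fin (m + 2) => ξ i.castSucc := hξ.comp Fin.strictMono_castSucc
    have hR : StrictMono fun i : Fin (m + 2) => ξ i.succ := hξ.comp Fin.strictMono_succ
    obtain ⟨CL, hCL⟩ := ih (by omega) hL
    obtain ⟨CR, hCR⟩ := ih (by omega) hR
    set cL : ℝ := (m + 1) / (ξ (Fin.last (m + 1)).castSucc - ξ 0)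
    set cR : ℝ := (m + 1) / (ξ (Fin.last (m + 2)) - ξ 1)
    have hderiv : bsplineDeriv (m + 1) ξ =
        fun y => cL * bspline m (fun i => ξ i.castSucc) y - cR * bspline m (fun i => ξ i.succ) y :=
      rfl
    refine ⟨|cL| * CL + |cR| * CR, fun h hh x => ?_⟩
    refine abs_finiteDiff_succ_le_of_hasDerivAt (finite_range ξ).countable
      (continuous_bspline_succ hξ) (fun y hy => hasDerivAt_bspline hξ hy) (fun a b => ?_) hh
      (fun y => ?_) x
    · rw [hderiv]
      exact ((intervalIntegrable_bspline hL.monotone a b).const_mul cL).sub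
        ((intervalIntegrable_bspline hR.monotone a b).const_mul cR)
    · rw [hderiv, finiteDiff_sub, finiteDiff_const_mul, finiteDiff_const_mul]
      calc _ ≤ |cL * finiteDiff r h (bspline m fun i => ξ i.castSucc) y|
            + |cR * finiteDiff r h (bspline m fun i => ξ i.succ) y| := abs_sub _ _
        _ ≤ |cL| * (CL * h ^ r) + |cR| * (CR * h ^ r) := by
          rw [abs_mul, abs_mul]
          gcongr
          exacts [hCL h hh y, hCR h hh y]
        _ = (|cL| * CL + |cR| * CR) * h ^ r := by ring

lemma finiteDiff_bspline_eq_zero {k : ℕ} {ξ : Fin (k + 2) → ℝ} {h x : ℝ} (hh : 0 ≤ h)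
    (hx : ∀ i, ξ i ∉ Icc x (x + (k + 1) * h)) : finiteDiff (k + 1) h (bspline k ξ) x = 0 := by
  obtain ⟨P, hP, hEq⟩ := exists_natDegree_le_eqOn_bspline k ξ hx
  have hpts : ∀ j ∈ Finset.range (k + 2), x + j * h ∈ Icc x (x + (k + 1) * h) := fun j hj => by
    have hj : (j : ℝ) ≤ k + 1 := by exact_mod_cast Nat.lt_succ_iff.1 (Finset.mem_range.1 hj)
    constructor <;> nlinarith
  rw [← finiteDiff_eval_eq_zero P (Nat.lt_succ_of_le hP) h x]
  exact Finset.sum_congr rfl fun j hj => by rw [hEq (hpts j hj)]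

def HasLpFiniteDiffBound (p : ℝ) (r : ℕ) (γ : ℝ) (f : ℝ → ℝ) : Prop :=
  ∃ C : ℝ≥0, ∀ h : ℝ, 0 < h → h ≤ 1 →
    eLpNorm (finiteDiff r h f) (ENNReal.ofReal p) (volume.restrict (Ioo 0 1))
      ≤ C * ENNReal.ofReal (h ^ γ)

namespace HasLpFiniteDiffBound

variable {p γ : ℝ} {r : ℕ} {f : ℝ → ℝ}

lemma mono_exponent (hf : HasLpFiniteDiffBound p r γ f) {γ' : ℝ} (hγ : γ' ≤ γ) :
    HasLpFiniteDiffBound p r γ' f := by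
  obtain ⟨C, hC⟩ := hf
  exact ⟨C, fun h hh h1 => (hC h hh h1).trans <|
    mul_le_mul_right (ENNReal.ofReal_le_ofReal (Real.rpow_le_rpow_of_exponent_ge hh h1 hγ)) _⟩

lemma const_mul (hf : HasLpFiniteDiffBound p r γ f) (c : ℝ) :
    HasLpFiniteDiffBound p r γ (fun x => c * f x) := by
  obtain ⟨C, hC⟩ := hf
  refine ⟨‖c‖₊ * C, fun h hh h1 => ?_⟩
  have : finiteDiff r h (fun x => c * f x) = c • finiteDiff r h f :=
    funext (finiteDiff_const_mul r h c f)
  rw [this, eLpNorm_const_smul, ENNReal.coe_mul, mul_assoc, enorm_eq_nnnorm]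
  gcongr
  exact hC h hh h1

lemma finset_sum {ι : Type*} {s : Finset ι} {F : ι → ℝ → ℝ} (hp : 1 ≤ p)
    (hF : ∀ i ∈ s, Measurable (F i)) (hb : ∀ i ∈ s, HasLpFiniteDiffBound p r γ (F i)) :
    HasLpFiniteDiffBound p r γ (fun x => ∑ i ∈ s, F i x) := by
  choose! C hC using hb
  refine ⟨∑ i ∈ s, C i, fun h hh h1 => ?_⟩
  have : finiteDiff r h (fun x => ∑ i ∈ s, F i x) = ∑ i ∈ s, finiteDiff r h (F i) := by
    funext x
    rw [finiteDiff_finset_sum, Finset.sum_apply]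
  rw [this, ENNReal.ofNNReal_finsetSum, Finset.sum_mul]
  refine (eLpNorm_sum_le (fun i hi => (measurable_finiteDiff r h (hF i hi)).aestronglyMeasurable)
    (ENNReal.one_le_ofReal.2 hp)).trans (Finset.sum_le_sum fun i hi => hC i hi h hh h1)

lemma of_abs_le {C : ℝ} (hC : ∀ h, 0 < h → ∀ x, |finiteDiff r h f x| ≤ C * h ^ r) :
    HasLpFiniteDiffBound p r r f := by
  refine ⟨C.toNNReal, fun h hh _ => ?_⟩
  have hvol : volume.restrict (Ioo (0 : ℝ) 1) univ = 1 := by simp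
  refine (eLpNorm_le_of_ae_bound (ae_of_all _ fun x => hC h hh x)).trans ?_
  rw [hvol, ENNReal.one_rpow, one_mul, Real.rpow_natCast]
  exact ENNReal.ofReal_mul' (by positivity) |>.le

end HasLpFiniteDiffBound

lemma hasLpFiniteDiffBound_bspline_top {k : ℕ} {ξ : Fin (k + 2) → ℝ} (hξ : StrictMono ξ)
    {p : ℝ} (hp : 0 < p) : HasLpFiniteDiffBound p (k + 1) (k + 1 / p) (bspline k ξ) := by
  obtain ⟨C, hC⟩ := exists_abs_finiteDiff_bspline_le le_rfl hξ
  have hC0 : 0 ≤ C := by simpa using (abs_nonneg _).trans (hC 1 zero_le_one 0)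
  refine ⟨(2 * C * ((k + 2) * (k + 1)) ^ (1 / p)).toNNReal, fun h hh h1 => ?_⟩
  set E := ⋃ i, Icc (ξ i - (k + 1) * h) (ξ i)
  have hpt (x : ℝ) :
      ‖finiteDiff (k + 1) h (bspline k ξ) x‖ ≤ E.indicator (fun _ => 2 * C * h ^ k) x := by
    by_cases hx : x ∈ E
    · rw [indicator_of_mem hx, Real.norm_eq_abs, finiteDiff_succ']
      linarith [abs_sub (finiteDiff k h (bspline k ξ) (x + h)) (finiteDiff k h (bspline k ξ) x),
        hC h hh.le (x + h), hC h hh.le x]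
    · rw [indicator_of_notMem hx, finiteDiff_bspline_eq_zero hh.le fun i hi =>
        hx (mem_iUnion.2 ⟨i, by constructor <;> linarith [hi.1, hi.2]⟩), norm_zero]
  have hE : volume.restrict (Ioo 0 1) E ≤ ENNReal.ofReal ((k + 2) * (k + 1) * h) := by
    refine (Measure.restrict_le_self _).trans ((measure_iUnion_fintype_le _ _).trans ?_)
    simp only [Real.volume_Icc, sub_sub_cancel, Finset.sum_const, Finset.card_univ,
      Fintype.card_fin, nsmul_eq_mul]
    rw [← ENNReal.ofReal_natCast, ← ENNReal.ofReal_mul (by positivity)]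
    push_cast
    rw [mul_assoc]
  calc eLpNorm (finiteDiff (k + 1) h (bspline k ξ)) (ENNReal.ofReal p) (volume.restrict (Ioo 0 1))
      ≤ eLpNorm (E.indicator fun _ => 2 * C * h ^ k) (ENNReal.ofReal p)
          (volume.restrict (Ioo 0 1)) := eLpNorm_mono_real hpt
    _ = ‖2 * C * h ^ k‖ₑ * volume.restrict (Ioo 0 1) E ^ (1 / p) := by
        rw [eLpNorm_indicator_const (MeasurableSet.iUnion fun _ => measurableSet_Icc)
          (by simpa using hp) ENNReal.ofReal_ne_top, ENNReal.toReal_ofReal hp.le]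
    _ ≤ ENNReal.ofReal (2 * C * h ^ k) * ENNReal.ofReal (((k + 2) * (k + 1) * h) ^ (1 / p)) := by
        rw [Real.enorm_eq_ofReal (by positivity),
          ← ENNReal.ofReal_rpow_of_nonneg (by positivity) (by positivity)]
        gcongr
    _ = (2 * C * ((k + 2) * (k + 1)) ^ (1 / p)).toNNReal
          * ENNReal.ofReal (h ^ ((k : ℝ) + 1 / p)) := by
        change _ = ENNReal.ofReal (2 * C * ((k + 2) * (k + 1)) ^ (1 / p)) * _
        rw [← ENNReal.ofReal_mul (by positivity), ← ENNReal.ofReal_mul (by positivity),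
          Real.mul_rpow (by positivity) hh.le, Real.rpow_add hh, Real.rpow_natCast]
        congr 1
        ring

lemma hasLpFiniteDiffBound_bspline {k r : ℕ} {ξ : Fin (k + 2) → ℝ} (hξ : StrictMono ξ) {p γ : ℝ}
    (hp : 0 < p) (hrk : r ≤ k + 1) (hγr : γ ≤ r) (hγk : γ ≤ k + 1 / p) :
    HasLpFiniteDiffBound p r γ (bspline k ξ) := by
  rcases hrk.lt_or_eq with hrk | rfl
  · obtain ⟨C, hC⟩ := exists_abs_finiteDiff_bspline_le (Nat.lt_succ_iff.1 hrk) hξ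
    exact (HasLpFiniteDiffBound.of_abs_le fun h hh => hC h hh.le).mono_exponent hγr
  · exact (hasLpFiniteDiffBound_bspline_top hξ hp).mono_exponent hγk

section Besov

variable {p q α : ℝ} {r : ℕ} {f : ℝ → ℝ}

lemma modSmooth_nonneg (p : ℝ) (r : ℕ) (f : ℝ → ℝ) (t : ℝ) : 0 ≤ modSmooth p r f t :=
  Real.sSup_nonneg <| by
    rintro _ ⟨h, -, rfl⟩
    exact Real.rpow_nonneg (integral_nonneg fun _ => Real.rpow_nonneg (abs_nonneg _) _) _

lemma integral_abs_rpow_rpow_eq_toReal_eLpNorm {μ : Measure ℝ} {u : ℝ → ℝ} (hp : 0 < p)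
    (hu : MemLp u (ENNReal.ofReal p) μ) :
    (∫ x, |u x| ^ p ∂μ) ^ (1 / p) = (eLpNorm u (ENNReal.ofReal p) μ).toReal := by
  rw [hu.eLpNorm_eq_integral_rpow_norm (by simpa using hp) ENNReal.ofReal_ne_top,
    ENNReal.toReal_ofReal hp.le, ENNReal.toReal_ofReal (by positivity)]
  simp only [Real.norm_eq_abs, one_div]

lemma modSmooth_le_of_eLpNorm_le (hp : 0 < p) (hf : Measurable f) {M : ℝ} (hM : ∀ x, |f x| ≤ M)
    {t B : ℝ} (hB : 0 ≤ B)
    (hbound : ∀ h ∈ Ioc 0 t, eLpNorm (finiteDiff r h f) (ENNReal.ofReal p)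
      (volume.restrict (Ioo 0 (1 - r * h))) ≤ ENNReal.ofReal B) :
    modSmooth p r f t ≤ B := by
  refine Real.sSup_le ?_ hB
  rintro _ ⟨h, hh, rfl⟩
  have hmem : MemLp (finiteDiff r h f) (ENNReal.ofReal p) (volume.restrict (Ioo 0 (1 - r * h))) :=
    MemLp.of_bound (measurable_finiteDiff r h hf).aestronglyMeasurable _
      (ae_of_all _ fun x => abs_finiteDiff_le hM)
  beta_reduce
  rw [integral_abs_rpow_rpow_eq_toReal_eLpNorm hp hmem]
  exact ENNReal.toReal_le_of_le_ofReal hB (hbound h hh)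

/-- Both `∫_0^1 t^{(γ - α) q - 1} dt` and `∫_1^∞ t^{-α q - 1} dt` are finite. -/
lemma besovSeminorm_lt_top {γ C B : ℝ} (hq : 0 < q) (hα : 0 < α) (hαγ : α < γ)
    (h0 : ∀ t ∈ Ioc 0 1, modSmooth p (besovR α) f t ≤ C * t ^ γ)
    (hbdd : ∀ t, modSmooth p (besovR α) f t ≤ B) : besovSeminorm p q α f < ⊤ := by
  have hintegrand {t D β : ℝ} (ht : 0 < t) (hω : modSmooth p (besovR α) f t ≤ D * t ^ β) :
      ENNReal.ofReal ((t ^ (-α) * modSmooth p (besovR α) f t) ^ q / t)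
        ≤ ENNReal.ofReal (D ^ q * t ^ ((β - α) * q - 1)) := by
    have hD : 0 ≤ D := nonneg_of_mul_nonneg_left ((modSmooth_nonneg _ _ _ _).trans hω)
      (by positivity)
    refine ENNReal.ofReal_le_ofReal ?_
    have hexp : t ^ (-α) * (D * t ^ β) = D * t ^ (β - α) := by
      rw [Real.rpow_neg ht.le, Real.rpow_sub ht]
      ring
    calc (t ^ (-α) * modSmooth p (besovR α) f t) ^ q / t ≤ (t ^ (-α) * (D * t ^ β)) ^ q / t :=
          div_le_div_of_nonneg_right (Real.rpow_le_rpow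
            (mul_nonneg (by positivity) (modSmooth_nonneg _ _ _ _))
            (mul_le_mul_of_nonneg_left hω (by positivity)) hq.le) ht.le
      _ = D ^ q * t ^ ((β - α) * q - 1) := by
          rw [hexp, Real.mul_rpow hD (by positivity), ← Real.rpow_mul ht.le, Real.rpow_sub ht,
            Real.rpow_one, mul_div_assoc]
  refine ENNReal.rpow_lt_top_of_nonneg (by positivity) (ne_of_lt ?_)
  rw [← Ioc_union_Ioi_eq_Ioi zero_le_one]
  refine (lintegral_union_le _ _ _).trans_lt (ENNReal.add_lt_top.2 ⟨?_, ?_⟩)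
  · have hint : IntegrableOn (fun t => C ^ q * t ^ ((γ - α) * q - 1)) (Ioc 0 1) := by
      have := (intervalIntegral.intervalIntegrable_rpow' (a := 0) (b := 1)
        (r := (γ - α) * q - 1) (by nlinarith)).const_mul (C ^ q)
      rwa [intervalIntegrable_iff, uIoc_of_le zero_le_one] at this
    exact lt_of_le_of_lt (setLIntegral_mono' measurableSet_Ioc fun t ht => hintegrand ht.1
      (h0 t ht)) hint.lintegral_lt_top
  · have hint : IntegrableOn (fun t => B ^ q * t ^ ((0 - α) * q - 1)) (Ioi 1) :=
      (integrableOn_Ioi_rpow_of_lt (by nlinarith) one_pos).const_mul _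
    exact lt_of_le_of_lt (setLIntegral_mono' measurableSet_Ioi fun t ht => hintegrand
      (one_pos.trans ht) (by rw [Real.rpow_zero, mul_one]; exact hbdd t)) hint.lintegral_lt_top

lemma memBesov_of_hasLpFiniteDiffBound {γ M : ℝ} (hp : 0 < p) (hq : 0 < q)
    (hα : 0 < α) (hαγ : α < γ) (hf : Measurable f) (hM : ∀ x, |f x| ≤ M)
    (hΔ : HasLpFiniteDiffBound p (besovR α) γ f) : memBesov p q α f := by
  obtain ⟨C, hC⟩ := hΔ
  set r := besovR α
  have hM0 : 0 ≤ M := (abs_nonneg _).trans (hM 0)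
  have hrestrict {h : ℝ} (hh : 0 < h) :
      eLpNorm (finiteDiff r h f) (ENNReal.ofReal p) (volume.restrict (Ioo 0 (1 - r * h)))
        ≤ eLpNorm (finiteDiff r h f) (ENNReal.ofReal p) (volume.restrict (Ioo 0 1)) :=
    eLpNorm_mono_measure _ (Measure.restrict_mono (Ioo_subset_Ioo_right (by
      have : 0 ≤ (r : ℝ) * h := by positivity
      linarith)) le_rfl)
  refine ⟨MemLp.of_bound hf.aestronglyMeasurable M (ae_of_all _ hM),
    besovSeminorm_lt_top hq hα hαγ (C := C) (B := 2 ^ r * M) (fun t ht => ?_) (fun t => ?_)⟩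
  · refine modSmooth_le_of_eLpNorm_le hp hf hM (by have := ht.1.le; positivity)
      fun h hh => (hrestrict hh.1).trans ((hC h hh.1 (hh.2.trans ht.2)).trans ?_)
    rw [ENNReal.ofReal_mul NNReal.zero_le_coe, ENNReal.ofReal_coe_nnreal]
    exact mul_le_mul_right (ENNReal.ofReal_le_ofReal
      (Real.rpow_le_rpow hh.1.le hh.2 (hα.trans hαγ).le)) _
  · refine modSmooth_le_of_eLpNorm_le hp hf hM (by positivity) fun h hh =>
      (hrestrict hh.1).trans ((eLpNorm_le_of_ae_bound
        (ae_of_all _ fun x => abs_finiteDiff_le hM)).trans ?_)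
    simp

theorem labs_mean_mem_besov_general (S : Finset ℕ) (hS : S.Nonempty)
    (J : ℕ → ℕ) (β : (k : ℕ) → Fin (J k) → ℝ)
    (ξ : (k : ℕ) → Fin (J k) → Fin (k + 2) → ℝ)
    (hξ : ∀ k ∈ S, ∀ l, StrictMono (ξ k l))
    (p q α : ℝ) (hp : 1 ≤ p) (hq : 1 ≤ q) (hα : 0 < α)
    (hαmin : α < S.min' hS + 1 / p) :
    memBesov p q α (fun x => ∑ k ∈ S, ∑ l, β k l * bspline k (ξ k l) x) := by
  have hp0 : 0 < p := one_pos.trans_le hp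
  set r := besovR α
  set γ := min (r : ℝ) (S.min' hS + 1 / p)
  have hαr : α < r := by simpa [r, besovR] using Nat.lt_floor_add_one α
  have hbspline (k : ℕ) (hk : k ∈ S) (l : Fin (J k)) :
      HasLpFiniteDiffBound p r γ (bspline k (ξ k l)) := by
    have hmk : (S.min' hS : ℝ) ≤ k := by exact_mod_cast S.min'_le k hk
    have hfloor : ⌊α⌋₊ < k + 1 := (Nat.floor_lt hα.le).2 (by
      push_cast
      linarith [(div_le_one hp0).2 hp])
    exact hasLpFiniteDiffBound_bspline (hξ k hk l) hp0 (by simp only [r, besovR]; omega)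
      (min_le_left _ _) ((min_le_right _ _).trans (by linarith))
  refine memBesov_of_hasLpFiniteDiffBound hp0 (one_pos.trans_le hq) hα (lt_min hαr hαmin)
    (M := ∑ k ∈ S, ∑ l, |β k l| * 2 ^ k) (by fun_prop) (fun x => ?_)
    (.finset_sum hp (fun k _ => by fun_prop) fun k hk =>
      .finset_sum hp (fun l _ => by fun_prop) fun l _ => (hbspline k hk l).const_mul _)
  refine (Finset.abs_sum_le_sum_abs _ _).trans (Finset.sum_le_sum fun k hk => ?_)
  refine (Finset.abs_sum_le_sum_abs _ _).trans (Finset.sum_le_sum fun l _ => ?_)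
  rw [abs_mul]
  exact mul_le_mul_of_nonneg_left (abs_bspline_le (hξ k hk l).monotone x) (abs_nonneg _)

/-- deterministic content of Theorem 2 of the paper: a finite linear
combination of B-spline basis functions of degrees `k ∈ S` with strictly increasing
knot vectors in `[0,1]` belongs to `B^α_{p,q}([0,1])` whenever
`0 < α < min S + 1/p`. -/
theorem labs_mean_mem_besov (S : Finset ℕ) (hS : S.Nonempty)
    (J : ℕ → ℕ) (β : (k : ℕ) → Fin (J k) → ℝ)
    (ξ : (k : ℕ) → Fin (J k) → Fin (k + 2) → ℝ)
    (hξ : ∀ k ∈ S, ∀ l, StrictMono (ξ k l))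
    (hξ0 : ∀ k ∈ S, ∀ l, 0 ≤ ξ k l 0)
    (hξ1 : ∀ k ∈ S, ∀ l, ξ k l (Fin.last (k + 1)) ≤ 1)
    (p q α : ℝ) (hp : 1 ≤ p) (hq : 1 ≤ q) (hα : 0 < α)
    (hαmin : α < S.min' hS + 1 / p) :
    memBesov p q α (fun x => ∑ k ∈ S, ∑ l, β k l * bspline k (ξ k l) x) :=
  labs_mean_mem_besov_general S hS J β ξ hξ p q α hp hq hα hαmin
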